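/- Let G be a finite simple graph with Edmonds–Gallai decomposition V(G) = A ⊔ C ⊔ D. Then ker(G) is contained in the union of the singleton components of G[D]. -/

import Mathlib

open Classical Finset

/-- Neighborhood of a set of vertices: all vertices adjacent to some vertex of `X`. -/
noncomputable def nbhd {V : Type*} (G : SimpleGraph V) [Fintype V] (X : Finset V) : Finset V :=
  Finset.univ.filter (fun v => ∃ x ∈ X, G.Adj x v)

/-- The difference `d(X) = |X| - |N(X)|`. -/
noncomputable def gdiff {V : Type*} (G : SimpleGraph V) [Fintype V] (X : Finset V) : ℤ :=
  (X.card : ℤ) - ((nbhd G X).card : ℤ)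

/-- `X` is an independent set of `G`. -/
def IsIndep {V : Type*} (G : SimpleGraph V) (X : Finset V) : Prop :=
  ∀ x ∈ X, ∀ y ∈ X, ¬ G.Adj x y

/-- The critical difference `d_c(G) = max { d(X) : X ⊆ V(G) }`. -/
noncomputable def critDiff {V : Type*} (G : SimpleGraph V) [Fintype V] : ℤ :=
  Finset.univ.powerset.sup' ⟨∅, Finset.empty_mem_powerset _⟩ (gdiff G)

/-- `X` is a critical set of `G`. -/
noncomputable def IsCritical {V : Type*} (G : SimpleGraph V) [Fintype V] (X : Finset V) : Prop :=
  gdiff G X = critDiff G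

/-- `ker G` : the intersection of all critical sets of `G`. -/
noncomputable def kerG {V : Type*} (G : SimpleGraph V) [Fintype V] : Finset V :=
  Finset.univ.filter (fun v => ∀ X : Finset V, IsCritical G X → v ∈ X)

/-- `diadem G` : the union of all critical independent sets of `G`. -/
noncomputable def diademG {V : Type*} (G : SimpleGraph V) [Fintype V] : Finset V :=
  Finset.univ.filter (fun v => ∃ X : Finset V, IsCritical G X ∧ IsIndep G X ∧ v ∈ X)

/-- The independence number `α(G)`. -/
noncomputable def alphaG {V : Type*} (G : SimpleGraph V) [Fintype V] : ℕ :=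
  (Finset.univ.powerset.filter (IsIndep G)).sup Finset.card

/-- `core G` : the intersection of all maximum independent sets of `G`. -/
noncomputable def coreG {V : Type*} (G : SimpleGraph V) [Fintype V] : Finset V :=
  Finset.univ.filter (fun v => ∀ I : Finset V, IsIndep G I → I.card = alphaG G → v ∈ I)

/-- `M` is a matching of `G`, given as a finite set of pairwise disjoint edges of `G`. -/
def IsMatchingF {V : Type*} (G : SimpleGraph V) (M : Finset (Sym2 V)) : Prop :=
  (↑M : Set (Sym2 V)) ⊆ G.edgeSet ∧
    ∀ e₁ ∈ M, ∀ e₂ ∈ M, e₁ ≠ e₂ → ∀ v : V, v ∈ e₁ → v ∉ e₂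

/-- The matching number `μ(G)`. -/
noncomputable def matchNum {V : Type*} (G : SimpleGraph V) [Fintype V] : ℕ :=
  ((Finset.univ : Finset (Finset (Sym2 V))).filter (IsMatchingF G)).sup Finset.card

/-- There is a matching from `A` into `B`: an injection of `A` into `B` along edges of `G`. -/
def MatchingFromInto {V : Type*} (G : SimpleGraph V) (A B : Finset V) : Prop :=
  ∃ f : V → V, Set.InjOn f ↑A ∧ ∀ a ∈ A, f a ∈ B ∧ G.Adj a (f a)

/-- The auxiliary bipartite graph `H_X` on vertex set `X ∪ N(X) ∪ {v, w}`, where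
`v = Sum.inr false` and `w = Sum.inr true`.  Its edges are the edges of `G` between
`X` and `N(X)`, the edge `vw`, and all edges from `v` to `N(X)`. -/
noncomputable def HX {V : Type*} (G : SimpleGraph V) [Fintype V] (X : Finset V) :
    SimpleGraph ({a : V // a ∈ X ∪ nbhd G X} ⊕ Bool) :=
  SimpleGraph.fromRel (fun p q =>
    match p, q with
    | Sum.inl a, Sum.inl b => a.1 ∈ X ∧ b.1 ∈ nbhd G X ∧ G.Adj a.1 b.1
    | Sum.inr false, Sum.inr true => True
    | Sum.inr false, Sum.inl b => b.1 ∈ nbhd G X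
    | _, _ => False)

/-- The copy of `X` inside the vertex set of `H_X`. -/
noncomputable def Xlift {V : Type*} (G : SimpleGraph V) [Fintype V] (X : Finset V) :
    Finset ({a : V // a ∈ X ∪ nbhd G X} ⊕ Bool) :=
  Finset.univ.filter (fun p => ∃ a : {a : V // a ∈ X ∪ nbhd G X}, p = Sum.inl a ∧ a.1 ∈ X)

/-- Edmonds–Gallai set `D`: vertices missed by some maximum matching. -/
noncomputable def gallaiD {V : Type*} (G : SimpleGraph V) [Fintype V] : Finset V :=
  Finset.univ.filter (fun v => ∃ M : Finset (Sym2 V),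
    IsMatchingF G M ∧ M.card = matchNum G ∧ ∀ e ∈ M, v ∉ e)

/-- Edmonds–Gallai set `A = N(D) - D`. -/
noncomputable def gallaiA {V : Type*} (G : SimpleGraph V) [Fintype V] : Finset V :=
  nbhd G (gallaiD G) \ gallaiD G

/-- Edmonds–Gallai set `C = V - A - D`. -/
noncomputable def gallaiC {V : Type*} (G : SimpleGraph V) [Fintype V] : Finset V :=
  (Finset.univ \ gallaiD G) \ gallaiA G

/-- The vertices of the singleton components of `G[D]`. -/
noncomputable def singlesD {V : Type*} (G : SimpleGraph V) [Fintype V] : Finset V :=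
  (gallaiD G).filter (fun v => ∀ w ∈ gallaiD G, ¬ G.Adj v w)

/-! `ker G` is critical and independent, and because it is the *smallest* critical set, Hall's
condition holds for matching `N(ker G)` into `ker G - v` for every `v ∈ ker G`. Every matching has
at most `|N(ker G)|` edges at `N(ker G)`, and its other edges avoid `ker G ∪ N(ker G)` altogether.
A Hall matching of `N(ker G)` into `ker G - v` together with a maximum matching avoiding
`ker G ∪ N(ker G)` attains this bound, so it is a maximum matching of `G` missing `v`: hence
`v ∈ D`. A matching missing a neighbour `w ∈ N(ker G)` of `v` falls one edge short of the bound,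
so no neighbour of `v` lies in `D`. -/

section Criticality

variable {V : Type*} [Fintype V] (G : SimpleGraph V)

lemma mem_nbhd {X : Finset V} {v : V} : v ∈ nbhd G X ↔ ∃ x ∈ X, G.Adj x v := by
  simp [nbhd]

lemma nbhd_mono {X Y : Finset V} (h : X ⊆ Y) : nbhd G X ⊆ nbhd G Y := fun _ hv =>
  let ⟨x, hx, hxv⟩ := (mem_nbhd G).1 hv
  (mem_nbhd G).2 ⟨x, h hx, hxv⟩

lemma nbhd_union (X Y : Finset V) : nbhd G (X ∪ Y) = nbhd G X ∪ nbhd G Y := by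
  ext v
  simp only [mem_nbhd, mem_union, or_and_right, exists_or]

lemma nbhd_sdiff_nbhd_subset (X T : Finset V) : nbhd G (X \ nbhd G T) ⊆ nbhd G X \ T := by
  intro u hu
  obtain ⟨x, hx, hxu⟩ := (mem_nbhd G).1 hu
  rw [mem_sdiff] at hx ⊢
  exact ⟨(mem_nbhd G).2 ⟨x, hx.1, hxu⟩, fun huT => hx.2 ((mem_nbhd G).2 ⟨u, huT, hxu.symm⟩)⟩

lemma gdiff_le_critDiff (X : Finset V) : gdiff G X ≤ critDiff G :=
  le_sup' _ (mem_powerset.2 (subset_univ X))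

lemma exists_isCritical : ∃ X, IsCritical G X := by
  obtain ⟨X, -, h⟩ := exists_mem_eq_sup' ⟨∅, empty_mem_powerset _⟩ (gdiff G)
  exact ⟨X, h.symm⟩

lemma gdiff_add_gdiff_le (X Y : Finset V) :
    gdiff G X + gdiff G Y ≤ gdiff G (X ∩ Y) + gdiff G (X ∪ Y) := by
  have hN : #(nbhd G (X ∩ Y)) ≤ #(nbhd G X ∩ nbhd G Y) :=
    card_le_card (subset_inter (nbhd_mono G inter_subset_left) (nbhd_mono G inter_subset_right))
  have hXY := card_inter_add_card_union X Y
  have hNXY := card_inter_add_card_union (nbhd G X) (nbhd G Y)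
  simp only [gdiff, nbhd_union]
  omega

lemma gdiff_add_le_gdiff_sdiff_nbhd (X T : Finset V) :
    gdiff G X + #(nbhd G X ∩ T) ≤ gdiff G (X \ nbhd G T) + #(X ∩ nbhd G T) := by
  have hN := card_le_card (nbhd_sdiff_nbhd_subset G X T)
  have hX := card_sdiff_add_card_inter X (nbhd G T)
  have hNX := card_sdiff_add_card_inter (nbhd G X) T
  simp only [gdiff]
  omega

variable {G}

lemma IsCritical.inter {X Y : Finset V} (hX : IsCritical G X) (hY : IsCritical G Y) :
    IsCritical G (X ∩ Y) := by
  have h := gdiff_add_gdiff_le G X Y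
  have hinter := gdiff_le_critDiff G (X ∩ Y)
  have hunion := gdiff_le_critDiff G (X ∪ Y)
  unfold IsCritical at *
  omega

lemma IsCritical.sdiff_nbhd {X T : Finset V} (hX : IsCritical G X)
    (h : #(X ∩ nbhd G T) ≤ #(nbhd G X ∩ T)) : IsCritical G (X \ nbhd G T) := by
  have hgain := gdiff_add_le_gdiff_sdiff_nbhd G X T
  have hle := gdiff_le_critDiff G (X \ nbhd G T)
  unfold IsCritical at *
  omega

lemma IsCritical.card_le_card_inter_nbhd {X S : Finset V} (hX : IsCritical G X)
    (hS : S ⊆ nbhd G X) : #S ≤ #(X ∩ nbhd G S) := by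
  have hgain := gdiff_add_le_gdiff_sdiff_nbhd G X S
  have hle := gdiff_le_critDiff G (X \ nbhd G S)
  rw [inter_eq_right.2 hS] at hgain
  unfold IsCritical at hX
  omega

lemma mem_kerG {v : V} : v ∈ kerG G ↔ ∀ X, IsCritical G X → v ∈ X := by
  simp [kerG]

lemma IsCritical.kerG_subset {X : Finset V} (hX : IsCritical G X) : kerG G ⊆ X :=
  fun _ hv => mem_kerG.1 hv X hX

variable (G)

lemma isCritical_kerG : IsCritical G (kerG G) := by
  let C := univ.filter (IsCritical G)
  obtain ⟨X, hX⟩ := exists_isCritical G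
  have hC : C.Nonempty := ⟨X, mem_filter.2 ⟨mem_univ _, hX⟩⟩
  have hker : kerG G = C.inf' hC id := by
    ext v
    simp [mem_kerG, C]
  rw [hker]
  exact inf'_mem {Z | IsCritical G Z} (fun _ hX _ hY => hX.inter hY) C hC id
    fun _ hX => (mem_filter.1 hX).2

lemma disjoint_kerG_nbhd : Disjoint (kerG G) (nbhd G (kerG G)) := by
  have hcrit := (isCritical_kerG G).sdiff_nbhd (T := kerG G) (by rw [inter_comm])
  exact disjoint_left.2 fun _ hv => (mem_sdiff.1 (hcrit.kerG_subset hv)).2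

lemma card_le_card_kerG_erase_inter_nbhd {v : V} {S : Finset V} (hv : v ∈ kerG G)
    (hS : S ⊆ nbhd G (kerG G)) : #S ≤ #((kerG G).erase v ∩ nbhd G S) := by
  have hle := (isCritical_kerG G).card_le_card_inter_nbhd hS
  rw [erase_inter]
  by_cases hvS : v ∈ nbhd G S
  · -- equality would make `ker G \ N(S)` a critical set missing `v`
    have hlt : #S < #(kerG G ∩ nbhd G S) := by
      refine lt_of_le_of_ne hle fun heq => ?_
      have hcrit := (isCritical_kerG G).sdiff_nbhd (T := S) (by rw [inter_eq_right.2 hS, heq])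
      exact (mem_sdiff.1 (hcrit.kerG_subset hv)).2 hvS
    rw [card_erase_of_mem (mem_inter.2 ⟨hv, hvS⟩)]
    omega
  · rwa [erase_eq_of_notMem fun h => hvS (mem_inter.1 h).2]

end Criticality

section Matchings

variable {V : Type*} {G : SimpleGraph V}

lemma IsMatchingF.mono {M N : Finset (Sym2 V)} (hM : IsMatchingF G M) (h : N ⊆ M) :
    IsMatchingF G N :=
  ⟨(coe_subset.2 h).trans hM.1, fun e₁ he₁ e₂ he₂ => hM.2 e₁ (h he₁) e₂ (h he₂)⟩

lemma IsMatchingF.union {M₁ M₂ : Finset (Sym2 V)} (h₁ : IsMatchingF G M₁) (h₂ : IsMatchingF G M₂)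
    (h : ∀ e₁ ∈ M₁, ∀ e₂ ∈ M₂, ∀ x ∈ e₁, x ∉ e₂) : IsMatchingF G (M₁ ∪ M₂) := by
  refine ⟨by simpa only [coe_union, Set.union_subset_iff] using ⟨h₁.1, h₂.1⟩, ?_⟩
  intro e₁ he₁ e₂ he₂ hne x hx₁ hx₂
  rcases mem_union.1 he₁ with he₁ | he₁ <;> rcases mem_union.1 he₂ with he₂ | he₂
  · exact h₁.2 e₁ he₁ e₂ he₂ hne x hx₁ hx₂
  · exact h e₁ he₁ e₂ he₂ x hx₁ hx₂
  · exact h e₂ he₂ e₁ he₁ x hx₂ hx₁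
  · exact h₂.2 e₁ he₁ e₂ he₂ hne x hx₁ hx₂

lemma disjoint_of_forall_notMem {M₁ M₂ : Finset (Sym2 V)}
    (h : ∀ e₁ ∈ M₁, ∀ e₂ ∈ M₂, ∀ x ∈ e₁, x ∉ e₂) : Disjoint M₁ M₂ := by
  refine disjoint_left.2 fun e he₁ he₂ => ?_
  induction e using Sym2.ind with
  | _ a b => exact h _ he₁ _ he₂ a (Sym2.mem_mk_left a b) (Sym2.mem_mk_left a b)

lemma IsMatchingF.card_filter_meets_le {M : Finset (Sym2 V)} (hM : IsMatchingF G M)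
    (T : Finset V) : #(M.filter fun e => ∃ x ∈ T, x ∈ e) ≤ #T := by
  refine card_le_card_of_forall_subsingleton (fun e x => x ∈ e) (fun e he => ?_) ?_
  · obtain ⟨x, hx, hxe⟩ := (mem_filter.1 he).2
    exact ⟨x, hx, hxe⟩
  · intro x _ e₁ ⟨he₁, hx₁⟩ e₂ ⟨he₂, hx₂⟩
    by_contra hne
    exact hM.2 e₁ (mem_filter.1 he₁).1 e₂ (mem_filter.1 he₂).1 hne x hx₁ hx₂

lemma MatchingFromInto.exists_isMatchingF {A B : Finset V} (h : MatchingFromInto G A B)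
    (hAB : Disjoint A B) :
    ∃ M, IsMatchingF G M ∧ #M = #A ∧ ∀ e ∈ M, ∀ x ∈ e, x ∈ A ∨ x ∈ B := by
  obtain ⟨f, hinj, hf⟩ := h
  have hne : ∀ a ∈ A, ∀ a' ∈ A, a ≠ f a' := fun a ha a' ha' =>
    disjoint_left.1 hAB ha ∘ fun h => h ▸ (hf a' ha').1
  refine ⟨A.image fun a => s(a, f a), ⟨?_, ?_⟩, card_image_of_injOn ?_, ?_⟩
  · intro e he
    obtain ⟨a, ha, rfl⟩ := mem_image.1 he
    exact (hf a ha).2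
  · intro e₁ he₁ e₂ he₂ hne₁₂ x hx₁ hx₂
    obtain ⟨a, ha, rfl⟩ := mem_image.1 he₁
    obtain ⟨a', ha', rfl⟩ := mem_image.1 he₂
    have haa' : a ≠ a' := fun h => hne₁₂ (h ▸ rfl)
    rw [Sym2.mem_iff] at hx₁ hx₂
    rcases hx₁ with rfl | rfl <;> rcases hx₂ with h | h
    · exact haa' h
    · exact hne x ha a' ha' h
    · exact hne a' ha' a ha h.symm
    · exact haa' (hinj ha ha' h)
  · intro a ha a' ha' h
    rcases Sym2.eq_iff.1 h with ⟨h, -⟩ | ⟨h, -⟩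
    · exact h
    · exact absurd h (hne a ha a' ha')
  · intro e he x hx
    obtain ⟨a, ha, rfl⟩ := mem_image.1 he
    rcases Sym2.mem_iff.1 hx with rfl | rfl
    · exact Or.inl ha
    · exact Or.inr (hf a ha).1

end Matchings

section MatchingBounds

variable {V : Type*} [Fintype V] (G : SimpleGraph V)

lemma matchingFromInto_of_hall {A B : Finset V} (h : ∀ S ⊆ A, #S ≤ #(B ∩ nbhd G S)) :
    MatchingFromInto G A B := by
  let t : A → Finset V := fun a => B.filter (G.Adj a)
  have hall : ∀ s : Finset A, #s ≤ #(s.biUnion t) := by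
    intro s
    have hs : s.biUnion t = B ∩ nbhd G (s.map (Function.Embedding.subtype _)) := by
      ext x
      simp only [mem_biUnion, mem_filter, mem_inter, mem_nbhd, mem_map, t]
      aesop
    rw [hs, ← card_map (Function.Embedding.subtype _)]
    exact h _ fun x hx => by
      obtain ⟨a, -, rfl⟩ := mem_map.1 hx
      exact a.2
  obtain ⟨f, hf, hft⟩ := (all_card_le_biUnion_card_iff_exists_injective t).1 hall
  refine ⟨fun a => if ha : a ∈ A then f ⟨a, ha⟩ else a, fun a ha b hb hab => ?_, fun a ha => ?_⟩
  · simp only [dif_pos (mem_coe.1 ha), dif_pos (mem_coe.1 hb)] at hab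
    exact congrArg Subtype.val (hf hab)
  · simpa [dif_pos ha, t] using hft ⟨a, ha⟩

variable {G}

lemma IsMatchingF.card_le_matchNum {M : Finset (Sym2 V)} (hM : IsMatchingF G M) :
    #M ≤ matchNum G :=
  le_sup (mem_filter.2 ⟨mem_univ _, hM⟩)

variable (G)

noncomputable def matchNumAvoiding (T : Finset V) : ℕ :=
  ((univ : Finset (Finset (Sym2 V))).filter
    fun M => IsMatchingF G M ∧ ∀ e ∈ M, ∀ x ∈ e, x ∉ T).sup card

lemma card_le_matchNumAvoiding {T : Finset V} {M : Finset (Sym2 V)} (hM : IsMatchingF G M)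
    (hT : ∀ e ∈ M, ∀ x ∈ e, x ∉ T) : #M ≤ matchNumAvoiding G T :=
  le_sup (mem_filter.2 ⟨mem_univ _, hM, hT⟩)

lemma exists_isMatchingF_card_eq_matchNumAvoiding (T : Finset V) :
    ∃ M, IsMatchingF G M ∧ (∀ e ∈ M, ∀ x ∈ e, x ∉ T) ∧ #M = matchNumAvoiding G T := by
  obtain ⟨M, hM, hcard⟩ : ∃ M ∈ _, matchNumAvoiding G T = #M :=
    exists_mem_eq_sup _ ⟨∅, mem_filter.2 ⟨mem_univ _, ⟨by simp, by simp⟩, by simp⟩⟩ card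
  exact ⟨M, (mem_filter.1 hM).2.1, (mem_filter.1 hM).2.2, hcard.symm⟩

variable {G}

-- An edge at `X` ends in `N(X)`, so an edge missing `T ⊇ N(X) ∩ V(M)` misses `X ∪ N(X)`.
lemma IsMatchingF.card_le_card_add_matchNumAvoiding {M : Finset (Sym2 V)} (hM : IsMatchingF G M)
    {X T : Finset V} (hT : ∀ e ∈ M, ∀ x ∈ e, x ∈ nbhd G X → x ∈ T) :
    #M ≤ #T + matchNumAvoiding G (X ∪ nbhd G X) := by
  have hrest : #(M.filter fun e => ¬∃ x ∈ T, x ∈ e) ≤ matchNumAvoiding G (X ∪ nbhd G X) := by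
    refine card_le_matchNumAvoiding G (hM.mono (filter_subset _ _)) fun e he x hx hxX => ?_
    obtain ⟨heM, hmiss⟩ := mem_filter.1 he
    have hxN : x ∉ nbhd G X := fun hxN => hmiss ⟨x, hT e heM x hx hxN, hx⟩
    have hedge : e ∈ G.edgeSet := hM.1 heM
    induction e using Sym2.ind with
    | _ a b =>
      rcases Sym2.mem_iff.1 hx with rfl | rfl
      · have hbN : b ∈ nbhd G X := (mem_nbhd G).2 ⟨x, (mem_union.1 hxX).resolve_right hxN, hedge⟩
        exact hmiss ⟨b, hT _ heM b (Sym2.mem_mk_right x b) hbN, Sym2.mem_mk_right x b⟩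
      · have haN : a ∈ nbhd G X :=
          (mem_nbhd G).2 ⟨x, (mem_union.1 hxX).resolve_right hxN, hedge.symm⟩
        exact hmiss ⟨a, hT _ heM a (Sym2.mem_mk_left a x) haN, Sym2.mem_mk_left a x⟩
  have hsplit := card_filter_add_card_filter_not (s := M) fun e => ∃ x ∈ T, x ∈ e
  have hmeets := hM.card_filter_meets_le T
  omega

lemma IsMatchingF.card_le {M : Finset (Sym2 V)} (hM : IsMatchingF G M) (X : Finset V) :
    #M ≤ #(nbhd G X) + matchNumAvoiding G (X ∪ nbhd G X) :=
  hM.card_le_card_add_matchNumAvoiding fun _ _ _ _ hx => hx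

lemma IsMatchingF.card_lt {M : Finset (Sym2 V)} (hM : IsMatchingF G M) {X : Finset V} {w : V}
    (hw : w ∈ nbhd G X) (hmiss : ∀ e ∈ M, w ∉ e) :
    #M < #(nbhd G X) + matchNumAvoiding G (X ∪ nbhd G X) := by
  have h := hM.card_le_card_add_matchNumAvoiding (X := X) (T := (nbhd G X).erase w)
    fun e he x hx hxN => mem_erase.2 ⟨fun hxw => hmiss e he (hxw ▸ hx), hxN⟩
  have herase := card_erase_of_mem hw
  have hpos := card_pos.2 ⟨w, hw⟩
  omega

variable (G)

lemma matchNum_le (X : Finset V) : matchNum G ≤ #(nbhd G X) + matchNumAvoiding G (X ∪ nbhd G X) :=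
  Finset.sup_le fun _ hM => (mem_filter.1 hM).2.card_le X

lemma exists_isMatchingF_card_eq_of_matchingFromInto {X : Finset V} {v : V} (hv : v ∈ X)
    (hX : Disjoint X (nbhd G X)) (h : MatchingFromInto G (nbhd G X) (X.erase v)) :
    ∃ M, IsMatchingF G M ∧ #M = #(nbhd G X) + matchNumAvoiding G (X ∪ nbhd G X) ∧
      ∀ e ∈ M, v ∉ e := by
  obtain ⟨M₁, hM₁, hcard₁, hV₁⟩ := h.exists_isMatchingF
    (disjoint_of_subset_right (erase_subset v X) hX.symm)
  obtain ⟨M₂, hM₂, hV₂, hcard₂⟩ := exists_isMatchingF_card_eq_matchNumAvoiding G (X ∪ nbhd G X)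
  have hdisj : ∀ e₁ ∈ M₁, ∀ e₂ ∈ M₂, ∀ x ∈ e₁, x ∉ e₂ := fun e₁ he₁ e₂ he₂ x hx₁ hx₂ =>
    hV₂ e₂ he₂ x hx₂ <|
      (hV₁ e₁ he₁ x hx₁).elim (mem_union_right X) (mem_union_left _ ∘ mem_of_mem_erase)
  refine ⟨M₁ ∪ M₂, hM₁.union hM₂ hdisj, ?_, fun e he hve => ?_⟩
  · rw [card_union_of_disjoint (disjoint_of_forall_notMem hdisj), hcard₁, hcard₂]
  · rcases mem_union.1 he with he | he
    · rcases hV₁ e he v hve with hvN | hvX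
      · exact disjoint_left.1 hX hv hvN
      · exact notMem_erase v X hvX
    · exact hV₂ e he v hve (mem_union_left _ hv)

end MatchingBounds

theorem stmt18_general {V : Type*} (G : SimpleGraph V) [Fintype V] :
    kerG G ⊆ singlesD G := by
  intro v hv
  obtain ⟨M₀, hM₀, hcard, hvM₀⟩ := exists_isMatchingF_card_eq_of_matchingFromInto G hv
    (disjoint_kerG_nbhd G)
    (matchingFromInto_of_hall G fun _ hS => card_le_card_kerG_erase_inter_nbhd G hv hS)
  have hmax : #M₀ = matchNum G :=
    le_antisymm hM₀.card_le_matchNum (hcard ▸ matchNum_le G (kerG G))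
  refine mem_filter.2 ⟨mem_filter.2 ⟨mem_univ _, M₀, hM₀, hmax, hvM₀⟩, fun w hw hvw => ?_⟩
  obtain ⟨-, M, hM, hMcard, hwM⟩ := mem_filter.1 hw
  have hshort := hM.card_lt ((mem_nbhd G).2 ⟨v, hv, hvw⟩) hwM
  omega

/-- `ker G` lies in the union of the singleton components of `G[D]`. -/
theorem stmt18 {V : Type*} (G : SimpleGraph V) [Fintype V] [DecidableEq V] [DecidableRel G.Adj] :
    kerG G ⊆ singlesD G :=
  stmt18_general G
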